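/- arXiv:1010.3234 — 3 statements merged into one kernel-verified Lean document; each statement's English description precedes it below -/
import Mathlib

section
/- For every γ ∈ Γ₃ and every triple (z₁,z₂,z₃) ∈ ℤ³ with corresponding linking matrix A ∈ Lk(3), the matrix γ·A (under the Γ₃ action on Lk(3)) is the linking matrix corresponding to f(γ)·(z₁,z₂,z₃), where ({±1})³ ⋊ S₃ acts naturally on ℤ³. -/
/-- An element `(ε₀, ε₁, …, ε_μ, p)` of the Whitten group `Γ_μ`:
a sign `ε₀ ∈ {±1}`, signs `ε₁, …, ε_μ` (indexed here by `Fin μ`, so `eps i` is `ε_{i+1}`),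
and a permutation `p ∈ S_μ`. -/
@[ext]
structure Whitten (mu : ℕ) where
  e0 : ℤˣ
  eps : Fin mu → ℤˣ
  perm : Equiv.Perm (Fin mu)

namespace Whitten

variable {mu : ℕ}

/-- The Whitten multiplication
`(ε₀,ε₁,…,ε_μ,p) * (ε₀',ε₁',…,ε_μ',q) = (ε₀ε₀', ε₁ε'_{p(1)}, …, ε_με'_{p(μ)}, qp)`. -/
instance : Mul (Whitten mu) :=
  ⟨fun a b => ⟨a.e0 * b.e0, fun i => a.eps i * b.eps (a.perm i), b.perm * a.perm⟩⟩

instance : One (Whitten mu) := ⟨⟨1, fun _ => 1, 1⟩⟩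

instance : Inv (Whitten mu) :=
  ⟨fun a => ⟨a.e0⁻¹, fun i => (a.eps (a.perm⁻¹ i))⁻¹, a.perm⁻¹⟩⟩

@[simp] lemma mul_e0 (a b : Whitten mu) : (a * b).e0 = a.e0 * b.e0 := rfl
@[simp] lemma mul_eps (a b : Whitten mu) (i : Fin mu) :
    (a * b).eps i = a.eps i * b.eps (a.perm i) := rfl
@[simp] lemma mul_perm (a b : Whitten mu) : (a * b).perm = b.perm * a.perm := rfl
@[simp] lemma one_e0 : (1 : Whitten mu).e0 = 1 := rfl
@[simp] lemma one_eps (i : Fin mu) : (1 : Whitten mu).eps i = 1 := rfl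
@[simp] lemma one_perm : (1 : Whitten mu).perm = 1 := rfl
@[simp] lemma inv_e0 (a : Whitten mu) : (a⁻¹).e0 = a.e0⁻¹ := rfl
@[simp] lemma inv_eps (a : Whitten mu) (i : Fin mu) :
    (a⁻¹).eps i = (a.eps (a.perm⁻¹ i))⁻¹ := rfl
@[simp] lemma inv_perm (a : Whitten mu) : (a⁻¹).perm = a.perm⁻¹ := rfl

/-- The Whitten group `Γ_μ`. -/
instance : Group (Whitten mu) where
  mul_assoc a b c := by
    ext i <;> simp [mul_assoc, Equiv.Perm.mul_apply]
  one_mul a := by ext i <;> simp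
  mul_one a := by ext i <;> simp
  inv_mul_cancel a := by ext i <;> simp

end Whitten

/-- An element `(δ₁, …, δ_μ, p)` of the semidirect product `({±1})^μ ⋊ S_μ`,
in which `S_μ` acts by permuting coordinates, with the multiplication
`(δ₁,…,δ_μ,p) * (δ₁',…,δ_μ',q) = (δ₁δ'_{p(1)}, …, δ_μδ'_{p(μ)}, qp)`
analogous to that of the Whitten group. -/
@[ext]
structure PermProd (mu : ℕ) where
  eps : Fin mu → ℤˣ
  perm : Equiv.Perm (Fin mu)

namespace PermProd

variable {mu : ℕ}

instance : Mul (PermProd mu) :=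
  ⟨fun a b => ⟨fun i => a.eps i * b.eps (a.perm i), b.perm * a.perm⟩⟩

instance : One (PermProd mu) := ⟨⟨fun _ => 1, 1⟩⟩

instance : Inv (PermProd mu) :=
  ⟨fun a => ⟨fun i => (a.eps (a.perm⁻¹ i))⁻¹, a.perm⁻¹⟩⟩

@[simp] lemma mul_eps (a b : PermProd mu) (i : Fin mu) :
    (a * b).eps i = a.eps i * b.eps (a.perm i) := rfl
@[simp] lemma mul_perm (a b : PermProd mu) : (a * b).perm = b.perm * a.perm := rfl
@[simp] lemma one_eps (i : Fin mu) : (1 : PermProd mu).eps i = 1 := rfl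
@[simp] lemma one_perm : (1 : PermProd mu).perm = 1 := rfl
@[simp] lemma inv_eps (a : PermProd mu) (i : Fin mu) :
    (a⁻¹).eps i = (a.eps (a.perm⁻¹ i))⁻¹ := rfl
@[simp] lemma inv_perm (a : PermProd mu) : (a⁻¹).perm = a.perm⁻¹ := rfl

/-- The group `({±1})^μ ⋊ S_μ`, where `S_μ` acts by permuting coordinates. -/
instance : Group (PermProd mu) where
  mul_assoc a b c := by
    ext i <;> simp [mul_assoc, Equiv.Perm.mul_apply]
  one_mul a := by ext i <;> simp
  mul_one a := by ext i <;> simp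
  inv_mul_cancel a := by ext i <;> simp

end PermProd

/-- The product `ε = ε₀ ε₁ ε₂ ε₃` of all the signs of an element of `Γ₃`. -/
def whittenEpsProd (γ : Whitten 3) : ℤˣ :=
  γ.e0 * (γ.eps 0 * (γ.eps 1 * γ.eps 2))

/-- The map `f : Γ₃ → ({±1})³ ⋊ S₃`,
`f(ε₀, ε₁, ε₂, ε₃, p) = (ε₁ε, ε₂ε, ε₃ε, p)` where `ε = ε₀ε₁ε₂ε₃`. -/
def whittenToPerm (γ : Whitten 3) : PermProd 3 :=
  ⟨fun i => γ.eps i * whittenEpsProd γ, γ.perm⟩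

/-- `Lk n` is the set of symmetric `n × n` integer matrices with zeros on the diagonal. -/
def Lk (n : ℕ) : Set (Matrix (Fin n) (Fin n) ℤ) :=
  {A | A.IsSymm ∧ ∀ i, A i i = 0}

/-- The action of the Whitten group `Γ_n` on `n × n` linking matrices:
`(γ · A)_{ij} = ε₀ ε_i ε_j A_{p(i) p(j)}` for `γ = (ε₀, ε₁, …, ε_n, p)`. -/
def lkAct {n : ℕ} (γ : Whitten n) (A : Matrix (Fin n) (Fin n) ℤ) :
    Matrix (Fin n) (Fin n) ℤ :=
  Matrix.of fun i j =>
    (γ.e0 : ℤ) * (γ.eps i : ℤ) * (γ.eps j : ℤ) * A (γ.perm i) (γ.perm j)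

/-- The correspondence between triples `(z₁, z₂, z₃) ∈ ℤ³` and linking matrices in `Lk 3`:
`A₂₃ = A₃₂ = z₁`, `A₁₃ = A₃₁ = z₂`, `A₁₂ = A₂₁ = z₃` (here written with indices `0,1,2`). -/
def tripleToMatrix (z : Fin 3 → ℤ) : Matrix (Fin 3) (Fin 3) ℤ :=
  !![0, z 2, z 1; z 2, 0, z 0; z 1, z 0, 0]

/-- The natural action of `({±1})^n ⋊ S_n` on `ℤ^n`:
`(δ₁, …, δ_n, q) · (z₁, …, z_n) = (δ₁ z_{q(1)}, …, δ_n z_{q(n)})`. -/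
def natAct {n : ℕ} (g : PermProd n) (z : Fin n → ℤ) : Fin n → ℤ :=
  fun i => (g.eps i : ℤ) * z (g.perm i)

lemma tripleToMatrix_apply (z : Fin 3 → ℤ) (i j : Fin 3) :
    tripleToMatrix z i j = if i = j then 0 else z (-(i + j)) := by
  fin_cases i <;> fin_cases j <;> simp [tripleToMatrix] <;> rfl

lemma perm_neg_add (p : Equiv.Perm (Fin 3)) (i j : Fin 3) (h : i ≠ j) :
    p (-(i + j)) = -(p i + p j) := by
  revert h
  revert i j
  revert p
  decide

lemma sign_identity (e0 : ℤˣ) (eps : Fin 3 → ℤˣ) (i j : Fin 3) (h : i ≠ j) :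
    (eps (-(i + j)) * (e0 * (eps 0 * (eps 1 * eps 2))) : ℤ) =
      (e0 : ℤ) * eps i * eps j := by
  fin_cases i <;> fin_cases j <;>
    simp_all [show (-1 : Fin 3) = 2 by decide, show (-2 : Fin 3) = 1 by decide] <;>
    rcases Int.units_eq_one_or (eps 0) with h1 | h1 <;>
    rcases Int.units_eq_one_or (eps 1) with h2 | h2 <;>
    rcases Int.units_eq_one_or (eps 2) with h3 | h3 <;>
    simp [h1, h2, h3]

/-- For every `γ ∈ Γ₃` and every triple `(z₁,z₂,z₃) ∈ ℤ³` with corresponding linking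
matrix `A ∈ Lk 3`, the matrix `γ · A` is the linking matrix corresponding to
`f(γ) · (z₁,z₂,z₃)`, where `({±1})³ ⋊ S₃` acts naturally on `ℤ³`. -/
theorem lkAct_tripleToMatrix_equivariant (γ : Whitten 3) (z : Fin 3 → ℤ) :
    lkAct γ (tripleToMatrix z) = tripleToMatrix (natAct (whittenToPerm γ) z) := by
  ext i j
  rw [show lkAct γ (tripleToMatrix z) i j =
      (γ.e0 : ℤ) * γ.eps i * γ.eps j * tripleToMatrix z (γ.perm i) (γ.perm j) from rfl,
    tripleToMatrix_apply, tripleToMatrix_apply]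
  by_cases h : i = j
  · simp [h]
  · have hp : γ.perm i ≠ γ.perm j := fun hc => h (γ.perm.injective hc)
    rw [if_neg hp, if_neg h]
    show _ = ((γ.eps (-(i+j)) : ℤ) * (whittenEpsProd γ : ℤ)) * z (γ.perm (-(i+j)))
    rw [perm_neg_add γ.perm i j h,
      show ((γ.eps (-(i+j)) : ℤ) * (whittenEpsProd γ : ℤ)) =
        (γ.e0 : ℤ) * γ.eps i * γ.eps j from sign_identity γ.e0 γ.eps i j h]
end

section
/- The map f : G → ({±1})⁴ ⋊ S₄ defined by f(ε₀,ε₁,ε₂,ε₃,ε₄,p) = (ε₀ε₁ε₂, ε₀ε₂ε₄, ε₀ε₁ε₃, ε₀ε₃ε₄, f₀(p)) is a group homomorphism whose kernel is the four-element subgroup {(1,1,1,1,1,e), (1,−1,−1,−1,−1,e), (−1,−1,1,1,−1,e), (−1,1,−1,−1,1,e)}, and whose image is exactly {(δ₁,δ₂,δ₃,δ₄,q) : δ₄ = δ₁δ₂δ₃ and q ∈ G₀}. -/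
/-- The 4-cycle `(1243)` of the paper (on symbols `1,2,3,4`), here as a
permutation of `{0,1,2,3}`: `0 ↦ 1 ↦ 3 ↦ 2 ↦ 0`. -/
def c1243 : Equiv.Perm (Fin 4) := Equiv.swap 0 2 * Equiv.swap 0 3 * Equiv.swap 0 1

/-- The 4-cycle `(1342)` of the paper, here as a permutation of `{0,1,2,3}`:
`0 ↦ 2 ↦ 3 ↦ 1 ↦ 0`. -/
def c1342 : Equiv.Perm (Fin 4) := Equiv.swap 0 1 * Equiv.swap 0 3 * Equiv.swap 0 2

/-- The set `G₀ = {e, (14), (23), (14)(23), (12)(34), (13)(24), (1243), (1342)} ⊆ S₄`,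
written with `0`-indexed symbols. -/
def G0set : Set (Equiv.Perm (Fin 4)) :=
  {1, Equiv.swap 0 3, Equiv.swap 1 2, Equiv.swap 0 3 * Equiv.swap 1 2,
    Equiv.swap 0 1 * Equiv.swap 2 3, Equiv.swap 0 2 * Equiv.swap 1 3, c1243, c1342}

open scoped Classical in
/-- The map `f₀ : G₀ → G₀`: `e ↦ e`, `(14) ↦ (12)(34)`, `(23) ↦ (13)(24)`,
`(14)(23) ↦ (14)(23)`, `(12)(34) ↦ (23)`, `(13)(24) ↦ (14)`, `(1243) ↦ (1243)`,
`(1342) ↦ (1342)` (extended by the identity off the four permuted elements). -/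
noncomputable def f0fun (p : Equiv.Perm (Fin 4)) : Equiv.Perm (Fin 4) :=
  if p = Equiv.swap 0 3 then Equiv.swap 0 1 * Equiv.swap 2 3
  else if p = Equiv.swap 1 2 then Equiv.swap 0 2 * Equiv.swap 1 3
  else if p = Equiv.swap 0 1 * Equiv.swap 2 3 then Equiv.swap 1 2
  else if p = Equiv.swap 0 2 * Equiv.swap 1 3 then Equiv.swap 0 3
  else p

/-- The subgroup `G = {(ε₀, ε₁, ε₂, ε₃, ε₄, p) ∈ Γ₄ : p ∈ G₀}` of `Γ₄`, as a set. -/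
def Gset : Set (Whitten 4) := {γ | γ.perm ∈ G0set}

/-- The map `f : G → ({±1})⁴ ⋊ S₄`,
`f(ε₀, ε₁, ε₂, ε₃, ε₄, p) = (ε₀ε₁ε₂, ε₀ε₂ε₄, ε₀ε₁ε₃, ε₀ε₃ε₄, f₀(p))`
(with `ε₁, ε₂, ε₃, ε₄` being `eps 0, eps 1, eps 2, eps 3`). -/
noncomputable def fG (γ : Whitten 4) : PermProd 4 :=
  ⟨![γ.e0 * γ.eps 0 * γ.eps 1, γ.e0 * γ.eps 1 * γ.eps 3,
     γ.e0 * γ.eps 0 * γ.eps 2, γ.e0 * γ.eps 2 * γ.eps 3], f0fun γ.perm⟩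

def G0list : List (Equiv.Perm (Fin 4)) :=
  [1, Equiv.swap 0 3, Equiv.swap 1 2, Equiv.swap 0 3 * Equiv.swap 1 2,
    Equiv.swap 0 1 * Equiv.swap 2 3, Equiv.swap 0 2 * Equiv.swap 1 3, c1243, c1342]

lemma f0_mul : ∀ p ∈ G0list, ∀ q ∈ G0list, f0fun (q * p) = f0fun q * f0fun p := by decide
lemma f0_inj1 : ∀ p ∈ G0list, f0fun p = 1 → p = 1 := by decide
lemma f0_surj : ∀ q ∈ G0list, ∃ p ∈ G0list, f0fun p = q := by decide
lemma f0_closed : ∀ p ∈ G0list, f0fun p ∈ G0list := by decide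

lemma mem_G0set_iff (p : Equiv.Perm (Fin 4)) : p ∈ G0set ↔ p ∈ G0list := by
  simp [G0set, G0list]

@[simp] lemma ev1 : (((1 : Equiv.Perm (Fin 4)) : Equiv.Perm (Fin 4))) 0 = 0 := by decide
@[simp] lemma ev2 : (((1 : Equiv.Perm (Fin 4)) : Equiv.Perm (Fin 4))) 1 = 1 := by decide
@[simp] lemma ev3 : (((1 : Equiv.Perm (Fin 4)) : Equiv.Perm (Fin 4))) 2 = 2 := by decide
@[simp] lemma ev4 : (((1 : Equiv.Perm (Fin 4)) : Equiv.Perm (Fin 4))) 3 = 3 := by decide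
@[simp] lemma ev5 : ((Equiv.swap (0:Fin 4) 3 : Equiv.Perm (Fin 4))) 0 = 3 := by decide
@[simp] lemma ev6 : ((Equiv.swap (0:Fin 4) 3 : Equiv.Perm (Fin 4))) 1 = 1 := by decide
@[simp] lemma ev7 : ((Equiv.swap (0:Fin 4) 3 : Equiv.Perm (Fin 4))) 2 = 2 := by decide
@[simp] lemma ev8 : ((Equiv.swap (0:Fin 4) 3 : Equiv.Perm (Fin 4))) 3 = 0 := by decide
@[simp] lemma ev9 : ((Equiv.swap (1:Fin 4) 2 : Equiv.Perm (Fin 4))) 0 = 0 := by decide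
@[simp] lemma ev10 : ((Equiv.swap (1:Fin 4) 2 : Equiv.Perm (Fin 4))) 1 = 2 := by decide
@[simp] lemma ev11 : ((Equiv.swap (1:Fin 4) 2 : Equiv.Perm (Fin 4))) 2 = 1 := by decide
@[simp] lemma ev12 : ((Equiv.swap (1:Fin 4) 2 : Equiv.Perm (Fin 4))) 3 = 3 := by decide
@[simp] lemma ev13 : ((Equiv.swap (0:Fin 4) 3 * Equiv.swap 1 2 : Equiv.Perm (Fin 4))) 0 = 3 := by decide
@[simp] lemma ev14 : ((Equiv.swap (0:Fin 4) 3 * Equiv.swap 1 2 : Equiv.Perm (Fin 4))) 1 = 2 := by decide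
@[simp] lemma ev15 : ((Equiv.swap (0:Fin 4) 3 * Equiv.swap 1 2 : Equiv.Perm (Fin 4))) 2 = 1 := by decide
@[simp] lemma ev16 : ((Equiv.swap (0:Fin 4) 3 * Equiv.swap 1 2 : Equiv.Perm (Fin 4))) 3 = 0 := by decide
@[simp] lemma ev17 : ((Equiv.swap (0:Fin 4) 1 * Equiv.swap 2 3 : Equiv.Perm (Fin 4))) 0 = 1 := by decide
@[simp] lemma ev18 : ((Equiv.swap (0:Fin 4) 1 * Equiv.swap 2 3 : Equiv.Perm (Fin 4))) 1 = 0 := by decide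
@[simp] lemma ev19 : ((Equiv.swap (0:Fin 4) 1 * Equiv.swap 2 3 : Equiv.Perm (Fin 4))) 2 = 3 := by decide
@[simp] lemma ev20 : ((Equiv.swap (0:Fin 4) 1 * Equiv.swap 2 3 : Equiv.Perm (Fin 4))) 3 = 2 := by decide
@[simp] lemma ev21 : ((Equiv.swap (0:Fin 4) 2 * Equiv.swap 1 3 : Equiv.Perm (Fin 4))) 0 = 2 := by decide
@[simp] lemma ev22 : ((Equiv.swap (0:Fin 4) 2 * Equiv.swap 1 3 : Equiv.Perm (Fin 4))) 1 = 3 := by decide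
@[simp] lemma ev23 : ((Equiv.swap (0:Fin 4) 2 * Equiv.swap 1 3 : Equiv.Perm (Fin 4))) 2 = 0 := by decide
@[simp] lemma ev24 : ((Equiv.swap (0:Fin 4) 2 * Equiv.swap 1 3 : Equiv.Perm (Fin 4))) 3 = 1 := by decide
@[simp] lemma ev25 : ((c1243 : Equiv.Perm (Fin 4))) 0 = 1 := by decide
@[simp] lemma ev26 : ((c1243 : Equiv.Perm (Fin 4))) 1 = 3 := by decide
@[simp] lemma ev27 : ((c1243 : Equiv.Perm (Fin 4))) 2 = 0 := by decide
@[simp] lemma ev28 : ((c1243 : Equiv.Perm (Fin 4))) 3 = 2 := by decide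
@[simp] lemma ev29 : ((c1342 : Equiv.Perm (Fin 4))) 0 = 2 := by decide
@[simp] lemma ev30 : ((c1342 : Equiv.Perm (Fin 4))) 1 = 0 := by decide
@[simp] lemma ev31 : ((c1342 : Equiv.Perm (Fin 4))) 2 = 3 := by decide
@[simp] lemma ev32 : ((c1342 : Equiv.Perm (Fin 4))) 3 = 1 := by decide
@[simp] lemma f0v0 : f0fun ((1 : Equiv.Perm (Fin 4))) = (1 : Equiv.Perm (Fin 4)) := by decide
@[simp] lemma f0v1 : f0fun (Equiv.swap (0:Fin 4) 3) = Equiv.swap (0:Fin 4) 1 * Equiv.swap 2 3 := by decide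
@[simp] lemma f0v2 : f0fun (Equiv.swap (1:Fin 4) 2) = Equiv.swap (0:Fin 4) 2 * Equiv.swap 1 3 := by decide
@[simp] lemma f0v3 : f0fun (Equiv.swap (0:Fin 4) 3 * Equiv.swap 1 2) = Equiv.swap (0:Fin 4) 3 * Equiv.swap 1 2 := by decide
@[simp] lemma f0v4 : f0fun (Equiv.swap (0:Fin 4) 1 * Equiv.swap 2 3) = Equiv.swap (1:Fin 4) 2 := by decide
@[simp] lemma f0v5 : f0fun (Equiv.swap (0:Fin 4) 2 * Equiv.swap 1 3) = Equiv.swap (0:Fin 4) 3 := by decide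
@[simp] lemma f0v6 : f0fun (c1243) = c1243 := by decide
@[simp] lemma f0v7 : f0fun (c1342) = c1342 := by decide

lemma u2 (a b : ℤˣ) : a * (a * b) = b := by
  rw [← mul_assoc, Int.units_mul_self, one_mul]

lemma whitten_eq (γ : Whitten 4) (e : ℤˣ) (v : Fin 4 → ℤˣ) (p : Equiv.Perm (Fin 4))
    (h0 : γ.e0 = e) (h1 : γ.eps 0 = v 0) (h2 : γ.eps 1 = v 1) (h3 : γ.eps 2 = v 2)
    (h4 : γ.eps 3 = v 3) (hp : γ.perm = p) : γ = ⟨e, v, p⟩ := by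
  refine Whitten.ext h0 (funext fun i => ?_) hp
  fin_cases i <;> assumption

/-- The map `f : G → ({±1})⁴ ⋊ S₄`,
`f(ε₀,ε₁,ε₂,ε₃,ε₄,p) = (ε₀ε₁ε₂, ε₀ε₂ε₄, ε₀ε₁ε₃, ε₀ε₃ε₄, f₀(p))`, is a group homomorphism
with kernel `{(1,1,1,1,1,e), (1,−1,−1,−1,−1,e), (−1,−1,1,1,−1,e), (−1,1,−1,−1,1,e)}` and
image exactly `{(δ₁,δ₂,δ₃,δ₄,q) : δ₄ = δ₁δ₂δ₃, q ∈ G₀}`. -/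
theorem fG_hom_ker_image :
    (∀ γ ∈ Gset, ∀ γ' ∈ Gset, fG (γ * γ') = fG γ * fG γ') ∧
    ({γ ∈ Gset | fG γ = 1} =
      ({1,
        ⟨1, fun _ => -1, 1⟩,
        ⟨-1, ![-1, 1, 1, -1], 1⟩,
        ⟨-1, ![1, -1, -1, 1], 1⟩} : Set (Whitten 4))) ∧
    (fG '' Gset =
      {g : PermProd 4 | g.eps 3 = g.eps 0 * g.eps 1 * g.eps 2 ∧ g.perm ∈ G0set}) := by
  refine ⟨?_, ?_, ?_⟩
  · intro γ hγ γ' hγ'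
    have hp := (mem_G0set_iff _).1 hγ
    have hq := (mem_G0set_iff _).1 hγ'
    apply PermProd.ext
    · funext i
      simp only [G0list, List.mem_cons, List.mem_singleton, List.not_mem_nil, or_false] at hp
      rcases hp with hp|hp|hp|hp|hp|hp|hp|hp <;> fin_cases i <;>
        · simp only [fG, PermProd.mul_eps, Whitten.mul_e0, Whitten.mul_eps, Whitten.mul_perm, hp,
            ev1, ev2, ev3, ev4, ev5, ev6, ev7, ev8, ev9, ev10, ev11, ev12, ev13, ev14, ev15, ev16,
            ev17, ev18, ev19, ev20, ev21, ev22, ev23, ev24, ev25, ev26, ev27, ev28, ev29, ev30,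
            ev31, ev32, f0v0, f0v1, f0v2, f0v3, f0v4, f0v5, f0v6, f0v7,
            Matrix.cons_val_zero, Matrix.cons_val_one, Matrix.head_cons, Matrix.cons_val_two,
            Matrix.tail_cons, Matrix.cons_val_three, Fin.isValue, Fin.mk_zero, Fin.mk_one,
            Fin.reduceFinMk]
          ac_rfl
    · show f0fun (γ'.perm * γ.perm) = f0fun γ'.perm * f0fun γ.perm
      exact f0_mul _ hp _ hq
  · ext γ
    constructor
    · rintro ⟨hγ, h1⟩
      have hperm0 : f0fun γ.perm = 1 := congrArg PermProd.perm h1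
      have hperm : γ.perm = 1 := f0_inj1 _ ((mem_G0set_iff _).1 hγ) hperm0
      have hA := congrFun (congrArg PermProd.eps h1) 0
      have hB := congrFun (congrArg PermProd.eps h1) 1
      have hC := congrFun (congrArg PermProd.eps h1) 2
      simp only [fG, Matrix.cons_val_zero, Matrix.cons_val_one, Matrix.head_cons,
        Matrix.cons_val_two, Matrix.tail_cons, PermProd.one_eps] at hA hB hC
      have hb : γ.eps 1 = γ.e0 * γ.eps 0 := by
        rw [eq_inv_of_mul_eq_one_right hA, Int.units_inv_eq_self]
      have hc : γ.eps 2 = γ.e0 * γ.eps 0 := by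
        rw [eq_inv_of_mul_eq_one_right hC, Int.units_inv_eq_self]
      have hd : γ.eps 3 = γ.eps 0 := by
        rw [eq_inv_of_mul_eq_one_right hB, Int.units_inv_eq_self, hb, ← mul_assoc,
          Int.units_mul_self, one_mul]
      simp only [Set.mem_insert_iff, Set.mem_singleton_iff]
      rcases Int.units_eq_one_or γ.e0 with he|he <;>
        rcases Int.units_eq_one_or (γ.eps 0) with ha|ha
      · exact Or.inl (whitten_eq γ _ _ _ he (by simp [ha]) (by simp [hb, he, ha])
          (by simp [hc, he, ha]) (by simp [hd, ha]) hperm)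
      · exact Or.inr (Or.inl (whitten_eq γ _ _ _ he (by simp [ha]) (by simp [hb, he, ha])
          (by simp [hc, he, ha]) (by simp [hd, ha]) hperm))
      · exact Or.inr (Or.inr (Or.inr (whitten_eq γ _ _ _ he (by simp [ha])
          (by simp [hb, he, ha]) (by simp [hc, he, ha]) (by simp [hd, ha]) hperm)))
      · exact Or.inr (Or.inr (Or.inl (whitten_eq γ _ _ _ he (by simp [ha])
          (by simp [hb, he, ha]) (by simp [hc, he, ha]) (by simp [hd, ha]) hperm)))
    · intro h
      rcases h with h|h|h|h <;> subst h <;>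
        refine ⟨by simp [Gset, G0set], PermProd.ext (funext fun i => ?_) (by exact f0v0)⟩ <;>
        fin_cases i <;> simp [fG]
  · ext g
    constructor
    · rintro ⟨γ, hγ, rfl⟩
      constructor
      · simp only [fG, Matrix.cons_val_zero, Matrix.cons_val_one, Matrix.head_cons,
          Matrix.cons_val_two, Matrix.tail_cons, Matrix.cons_val_three]
        simp [mul_comm, mul_left_comm, mul_assoc, u2, Int.units_mul_self]
      · exact (mem_G0set_iff _).2 (f0_closed _ ((mem_G0set_iff _).1 hγ))
    · rintro ⟨h4, hq⟩
      obtain ⟨p, hpmem, hp⟩ := f0_surj _ ((mem_G0set_iff _).1 hq)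
      refine ⟨⟨1, ![1, g.eps 0, g.eps 2, g.eps 0 * g.eps 1], p⟩, (mem_G0set_iff _).2 hpmem, ?_⟩
      refine PermProd.ext (funext fun i => ?_) hp
      fin_cases i <;>
        simp [fG, h4, mul_comm, mul_left_comm, mul_assoc, u2, Int.units_mul_self]
end

section
/- For every γ = (ε₀,ε₁,ε₂,ε₃,ε₄,p) ∈ G and every quadruple (z₁,z₂,z₃,z₄) ∈ ℤ⁴ with corresponding matrix A ∈ Lk(4), the matrix γ·A (under the Γ₄ action on Lk(4)) is again of the same zero-pattern form and is the matrix corresponding to f(γ)·(z₁,z₂,z₃,z₄), where ({±1})⁴ ⋊ S₄ acts naturally on ℤ⁴. -/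
/-- The correspondence between quadruples `(z₁, z₂, z₃, z₄) ∈ ℤ⁴` and matrices in `Lk 4`
of the special zero-pattern form: `A₁₂ = A₂₁ = z₁`, `A₂₄ = A₄₂ = z₂`, `A₁₃ = A₃₁ = z₃`,
`A₃₄ = A₄₃ = z₄`, and `A₁₄ = A₄₁ = A₂₃ = A₃₂ = 0` (indices written `0`-based). -/
def quadToMatrix (z : Fin 4 → ℤ) : Matrix (Fin 4) (Fin 4) ℤ :=
  !![0, z 0, z 2, 0; z 0, 0, 0, z 1; z 2, 0, 0, z 3; 0, z 1, z 3, 0]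

lemma c1243_apply (i : Fin 4) : c1243 i = ![1, 3, 0, 2] i := by
  fin_cases i <;> decide

lemma c1342_apply (i : Fin 4) : c1342 i = ![2, 0, 3, 1] i := by
  fin_cases i <;> decide

lemma f0_one : f0fun 1 = 1 := by
  rw [f0fun, if_neg (by decide), if_neg (by decide), if_neg (by decide),
    if_neg (by decide)]

lemma f0_s03 : f0fun (Equiv.swap 0 3) = Equiv.swap 0 1 * Equiv.swap 2 3 := by
  rw [f0fun, if_pos rfl]

lemma f0_s12 : f0fun (Equiv.swap 1 2) = Equiv.swap 0 2 * Equiv.swap 1 3 := by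
  rw [f0fun, if_neg (by decide), if_pos rfl]

lemma f0_s03s12 : f0fun (Equiv.swap 0 3 * Equiv.swap 1 2)
    = Equiv.swap 0 3 * Equiv.swap 1 2 := by
  rw [f0fun, if_neg (by decide), if_neg (by decide), if_neg (by decide),
    if_neg (by decide)]

lemma f0_s01s23 : f0fun (Equiv.swap 0 1 * Equiv.swap 2 3) = Equiv.swap 1 2 := by
  rw [f0fun, if_neg (by decide), if_neg (by decide), if_pos rfl]

lemma f0_s02s13 : f0fun (Equiv.swap 0 2 * Equiv.swap 1 3) = Equiv.swap 0 3 := by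
  rw [f0fun, if_neg (by decide), if_neg (by decide), if_neg (by decide),
    if_pos rfl]

lemma f0_c1243 : f0fun c1243 = c1243 := by
  rw [f0fun, if_neg (by decide), if_neg (by decide), if_neg (by decide),
    if_neg (by decide)]

lemma f0_c1342 : f0fun c1342 = c1342 := by
  rw [f0fun, if_neg (by decide), if_neg (by decide), if_neg (by decide),
    if_neg (by decide)]

set_option maxHeartbeats 1000000 in
/-- For every `γ ∈ G` and quadruple `(z₁,z₂,z₃,z₄) ∈ ℤ⁴` with corresponding matrix
`A ∈ Lk 4` of the special zero-pattern form, `γ · A` is again of that form and is the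
matrix corresponding to `f(γ) · (z₁,z₂,z₃,z₄)`. -/
theorem lkAct_quadToMatrix_equivariant (γ : Whitten 4) (hγ : γ ∈ Gset)
    (z : Fin 4 → ℤ) :
    lkAct γ (quadToMatrix z) = quadToMatrix (natAct (fG γ) z) := by
  obtain ⟨e0, eps, p⟩ := γ
  simp only [Gset, G0set, Set.mem_setOf_eq, Set.mem_insert_iff,
    Set.mem_singleton_iff] at hγ
  rcases hγ with rfl | rfl | rfl | rfl | rfl | rfl | rfl | rfl <;>
  · ext i j
    fin_cases i <;> fin_cases j <;>
      simp [lkAct, quadToMatrix, natAct, fG, f0_one, f0_s03, f0_s12, f0_s03s12,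
        f0_s01s23, f0_s02s13, f0_c1243, f0_c1342, c1243_apply, c1342_apply,
        Equiv.swap_apply_def, Equiv.Perm.mul_apply, Units.val_mul] <;>
      (first | ring1 | exact Or.inl (by ring))
end
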